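/- arXiv:1610.04253 — 6 statements merged into one kernel-verified Lean document; each statement's English description precedes it below -/
import Mathlib

section
/- If n is a natural number with exactly 4 positive divisors and n can be written as a sum of all but at most k of its proper divisors for some k ≥ 0 (i.e., there is a subset S of proper divisors of n with n = ∑_{d∈S} d), then n = 6. -/
theorem eq_six_of_tau_four_pseudoperfect (n : ℕ) (hτ : n.divisors.card = 4)
    (h : ∃ S ⊆ n.properDivisors, ∑ d ∈ S, d = n) :
    n = 6 := by
  obtain ⟨S, hS, hsum⟩ := h
  have hn0 : n ≠ 0 := by
    intro h0; subst h0; simp at hτ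
  have hn1 : 1 < n := by
    rcases Nat.lt_or_ge n 2 with h2 | h2
    · interval_cases n <;> simp_all
    · omega
  have h1mem : 1 ∈ n.properDivisors := Nat.one_mem_properDivisors_iff_one_lt.mpr hn1
  have hins : insert n n.properDivisors = n.divisors := Nat.insert_self_properDivisors hn0
  have hcard : n.properDivisors.card = 3 := by
    have := Finset.card_insert_of_notMem (Nat.self_notMem_properDivisors (n := n))
    rw [hins, hτ] at this
    omega
  -- sum of all proper divisors ≥ n
  have hge : n ≤ ∑ d ∈ n.properDivisors, d := by
    have h' : ∑ d ∈ S, d ≤ ∑ d ∈ n.properDivisors, d :=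
      Finset.sum_le_sum_of_subset hS
    omega
  set T := n.properDivisors.erase 1 with hT
  have hTcard : T.card = 2 := by
    rw [hT, Finset.card_erase_of_mem h1mem, hcard]
  obtain ⟨a, b, hab, hTab⟩ := Finset.card_eq_two.mp hTcard
  have haT : a ∈ T := by rw [hTab]; simp
  have hbT : b ∈ T := by rw [hTab]; simp
  have ha1 : a ≠ 1 := (Finset.mem_erase.mp haT).1
  have hb1 : b ≠ 1 := (Finset.mem_erase.mp hbT).1
  have hamem : a ∈ n.properDivisors := (Finset.mem_erase.mp haT).2
  have hbmem : b ∈ n.properDivisors := (Finset.mem_erase.mp hbT).2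
  have hadvd : a ∣ n := (Nat.mem_properDivisors.mp hamem).1
  have hbdvd : b ∣ n := (Nat.mem_properDivisors.mp hbmem).1
  have haltn : a < n := (Nat.mem_properDivisors.mp hamem).2
  have hbltn : b < n := (Nat.mem_properDivisors.mp hbmem).2
  have ha0 : a ≠ 0 := by rintro rfl; exact hn0 (Nat.eq_zero_of_zero_dvd hadvd)
  have hb0 : b ≠ 0 := by rintro rfl; exact hn0 (Nat.eq_zero_of_zero_dvd hbdvd)
  have ha2 : 2 ≤ a := by omega
  have hb2 : 2 ≤ b := by omega
  have hsumPD : ∑ d ∈ n.properDivisors, d = 1 + (a + b) := by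
    have hpd : n.properDivisors = insert 1 T := by
      rw [hT, Finset.insert_erase h1mem]
    rw [hpd, Finset.sum_insert (by simp [hT]), hTab, Finset.sum_pair hab]
  rw [hsumPD] at hge
  -- key: each proper divisor d satisfies 2*d ≤ n
  have key : ∀ d : ℕ, d ∣ n → d < n → d ≠ 0 → 2 * d ≤ n := by
    intro d hd hdn hd0
    obtain ⟨k, rfl⟩ := hd
    have : 2 ≤ k := by
      rcases Nat.lt_or_ge k 2 with hk | hk
      · interval_cases k <;> omega
      · exact hk
    nlinarith
  have h2a := key a hadvd haltn ha0
  have h2b := key b hbdvd hbltn hb0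
  have main : ∀ x y : ℕ, x < y → 2 ≤ x → x ∣ n → y ∣ n → x ∈ T → y ∈ T →
      n ≤ 1 + (x + y) → 2 * y ≤ n → n = 6 := by
    intro x y hxy hx2 hxd hyd hxT hyT hle h2y
    have hyx : y = x + 1 := by omega
    have hcop : Nat.Coprime x y := by rw [hyx]; simp
    have hxyd : x * y ∣ n := hcop.mul_dvd_of_dvd_of_dvd hxd hyd
    have hygt : y < x * y := by
      calc y = 1 * y := (one_mul y).symm
      _ < x * y := by
        apply Nat.mul_lt_mul_of_lt_of_le (by omega) (le_refl y) (by omega)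
    have hxyn : x * y = n := by
      by_contra hne
      have hlt : x * y < n := lt_of_le_of_ne (Nat.le_of_dvd (by omega) hxyd) hne
      have hmem : x * y ∈ T := by
        rw [hT, Finset.mem_erase]
        exact ⟨by omega, Nat.mem_properDivisors.mpr ⟨hxyd, hlt⟩⟩
      have hx' : x = a ∨ x = b := by rw [hTab] at hxT; simpa using hxT
      have hy' : y = a ∨ y = b := by rw [hTab] at hyT; simpa using hyT
      have hm' : x * y = a ∨ x * y = b := by rw [hTab] at hmem; simpa using hmem
      omega
    have hx2' : x = 2 := by nlinarith
    subst hx2'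
    omega
  rcases Nat.lt_or_ge a b with hlt | hge'
  · exact main a b hlt ha2 hadvd hbdvd haT hbT (by omega) h2b
  · have hlt : b < a := lt_of_le_of_ne hge' (Ne.symm hab)
    exact main b a hlt hb2 hbdvd hadvd hbT haT (by omega) h2a
end

section
/- Suppose n = pm where p is a prime not dividing m. If there exists a set D of proper divisors of n with |D| ≤ k such that σ(n) = 2n + ∑_{d∈D} d and D contains every positive divisor of m, then τ(m) ≤ k and there is a set D' of proper divisors of m with |D'| ≤ k − τ(m) and σ(m) = 2m + ∑_{d∈D'} d, i.e. m is a (k − τ(m))-near-perfect number. -/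
theorem near_perfect_of_all_divisors_redundant (p m k : ℕ) (hp : p.Prime) (hpm : ¬ p ∣ m)
    (hm : 0 < m) (D : Finset ℕ) (hD : D ⊆ (p * m).properDivisors) (hDcard : D.card ≤ k)
    (hσ : ArithmeticFunction.sigma 1 (p * m) = 2 * (p * m) + ∑ d ∈ D, d)
    (hall : m.divisors ⊆ D) :
    m.divisors.card ≤ k ∧
    ∃ D' ⊆ m.properDivisors, D'.card ≤ k - m.divisors.card ∧
      ArithmeticFunction.sigma 1 m = 2 * m + ∑ d ∈ D', d := by
  have hp0 : 0 < p := hp.pos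
  have hcop : Nat.Coprime p m := (Nat.Prime.coprime_iff_not_dvd hp).mpr hpm
  set D2 : Finset ℕ := D \ m.divisors with hD2
  have hkey : ∀ e ∈ D2, p ∣ e ∧ e / p ∈ m.properDivisors := by
    intro e he
    rw [hD2, Finset.mem_sdiff] at he
    obtain ⟨heD, hem⟩ := he
    have hepm := hD heD
    rw [Nat.mem_properDivisors] at hepm
    obtain ⟨hdvd, hlt⟩ := hepm
    have hpe : p ∣ e := by
      by_contra hpe
      have hc : Nat.Coprime p e := (hp.coprime_iff_not_dvd).mpr hpe
      have : e ∣ m := (Nat.Coprime.dvd_of_dvd_mul_left hc.symm hdvd)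
      exact hem (Nat.mem_divisors.mpr ⟨this, hm.ne'⟩)
    refine ⟨hpe, ?_⟩
    obtain ⟨d, rfl⟩ := hpe
    rw [Nat.mul_div_cancel_left _ hp0]
    have hdm : d ∣ m := (Nat.mul_dvd_mul_iff_left hp0).mp hdvd
    have hdlt : d < m := lt_of_mul_lt_mul_left hlt (le_of_lt hp0)
    exact Nat.mem_properDivisors.mpr ⟨hdm, hdlt⟩
  have hinj : ∀ x ∈ D2, ∀ y ∈ D2, x / p = y / p → x = y := by
    intro x hx y hy h
    rw [← Nat.div_mul_cancel (hkey x hx).1, ← Nat.div_mul_cancel (hkey y hy).1, h]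
  set D' : Finset ℕ := D2.image (· / p) with hD'
  have hsub : D' ⊆ m.properDivisors := by
    intro d hd
    rw [hD', Finset.mem_image] at hd
    obtain ⟨e, he, rfl⟩ := hd
    exact (hkey e he).2
  have hcard2 : D'.card = D2.card := Finset.card_image_of_injOn hinj
  have hcards : D2.card = D.card - m.divisors.card := by
    rw [hD2, Finset.card_sdiff_of_subset hall]
  have hdle : m.divisors.card ≤ D.card := Finset.card_le_card hall
  -- sums
  have hsum_split : ∑ e ∈ D2, e + ∑ d ∈ m.divisors, d = ∑ d ∈ D, d :=
    Finset.sum_sdiff hall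
  have hsumD' : p * ∑ d ∈ D', d = ∑ e ∈ D2, e := by
    rw [hD', Finset.sum_image hinj, Finset.mul_sum]
    exact Finset.sum_congr rfl fun e he => Nat.mul_div_cancel' (hkey e he).1
  have hmul : ArithmeticFunction.sigma 1 (p * m)
      = (1 + p) * ArithmeticFunction.sigma 1 m := by
    rw [ArithmeticFunction.isMultiplicative_sigma.map_mul_of_coprime hcop]
    congr 1
    rw [ArithmeticFunction.sigma_one_apply, hp.divisors,
      Finset.sum_pair hp.one_lt.ne]
  have hsigmam : ArithmeticFunction.sigma 1 m = ∑ d ∈ m.divisors, d :=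
    ArithmeticFunction.sigma_one_apply m
  set A := ArithmeticFunction.sigma 1 m with hA
  set S := ∑ d ∈ D', d with hS
  have heq : A + p * A = 2 * (p * m) + (p * S + A) := by
    have : (1 + p) * A = 2 * (p * m) + ∑ d ∈ D, d := by rw [← hmul, hσ]
    rw [← hsum_split, ← hsumD', ← hsigmam] at this
    linarith [this]
  have h2 : p * A = 2 * (p * m) + p * S := by linarith [heq]
  have hpA : p * A = p * (2 * m + S) := by rw [h2]; ring
  have hfin : A = 2 * m + S := Nat.eq_of_mul_eq_mul_left hp0 hpA
  refine ⟨le_trans hdle hDcard, D', hsub, ?_, hfin⟩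
  omega
end

section
/- For every prime q such that 2^q − 1 is also prime, and every prime p not dividing m := 2^{q-1}(2^q − 1), the number n = pm is a sum of exactly 2q − 1 of its proper divisors, and hence n is a (2q)-exactly-perfect number: n is a sum of all of its proper divisors with exactly 2q exceptions. -/
theorem mersenne_gives_exactly_perfect (q p : ℕ) (hq : q.Prime) (hq2 : (2 ^ q - 1).Prime)
    (hp : p.Prime) (hpm : ¬ p ∣ 2 ^ (q - 1) * (2 ^ q - 1)) :
    (∃ S ⊆ (p * (2 ^ (q - 1) * (2 ^ q - 1))).properDivisors,
        S.card = 2 * q - 1 ∧ ∑ d ∈ S, d = p * (2 ^ (q - 1) * (2 ^ q - 1))) ∧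
    (∃ D ⊆ (p * (2 ^ (q - 1) * (2 ^ q - 1))).properDivisors,
        D.card = 2 * q ∧
        ∑ d ∈ (p * (2 ^ (q - 1) * (2 ^ q - 1))).properDivisors \ D, d =
          p * (2 ^ (q - 1) * (2 ^ q - 1))) := by
  set m := 2 ^ (q - 1) * (2 ^ q - 1) with hm
  have hq1 : 2 ≤ q := hq.two_le
  have h2q : (2:ℕ) ^ q = 2 ^ (q - 1) * 2 := by
    rw [← pow_succ]; congr 1; omega
  have h2qbig : 4 ≤ 2 ^ q := by
    calc (4:ℕ) = 2 ^ 2 := by norm_num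
    _ ≤ 2 ^ q := Nat.pow_le_pow_right (by norm_num) hq1
  have hmersne : (2:ℕ) ^ q - 1 ≠ 2 := by omega
  have hcop : Nat.Coprime (2 ^ (q - 1)) (2 ^ q - 1) := by
    apply Nat.Coprime.pow_left
    exact (Nat.coprime_primes Nat.prime_two hq2).mpr (fun h => hmersne h.symm)
  -- sum of divisors of 2^(q-1)
  have hsum1 : ∑ d ∈ ((2:ℕ) ^ (q - 1)).divisors, d = 2 ^ q - 1 := by
    rw [Nat.sum_divisors_prime_pow Nat.prime_two]
    have := Nat.geomSum_eq (le_refl 2) (q - 1 + 1)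
    rw [show (2:ℕ) - 1 = 1 from rfl, Nat.div_one] at this
    rw [this]
    have : q - 1 + 1 = q := by omega
    rw [this]
  -- sum of divisors of the Mersenne prime
  have hsum2 : ∑ d ∈ ((2:ℕ) ^ q - 1).divisors, d = 2 ^ q := by
    rw [hq2.divisors, Finset.sum_insert (by simp; omega), Finset.sum_singleton]
    omega
  have hσm : ∑ d ∈ m.divisors, d = 2 * m := by
    rw [hm, hcop.sum_divisors_mul, hsum1, hsum2]
    generalize (2:ℕ) ^ q - 1 = r
    rw [h2q]; ring
  have hmpos : 0 < m := Nat.mul_pos (pow_pos (by norm_num) _) (by omega)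
  have hsumm : ∑ d ∈ m.properDivisors, d = m := by
    have := Nat.sum_divisors_eq_sum_properDivisors_add_self (n := m)
    omega
  -- card of divisors of m
  have hcard1 : ((2:ℕ) ^ (q - 1)).divisors.card = q := by
    rw [Nat.divisors_prime_pow Nat.prime_two, Finset.card_map, Finset.card_range]
    omega
  have hcard2 : ((2:ℕ) ^ q - 1).divisors.card = 2 := by
    rw [hq2.divisors, Finset.card_insert_of_notMem (by simp; omega), Finset.card_singleton]
  have hcardm : m.divisors.card = 2 * q := by
    rw [hm, hcop.card_divisors_mul, hcard1, hcard2]; ring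
  have hcardpm : m.properDivisors.card = 2 * q - 1 := by
    have h1 : insert m m.properDivisors = m.divisors :=
      Nat.insert_self_properDivisors hmpos.ne'
    have h2 : m ∉ m.properDivisors := Nat.self_notMem_properDivisors
    have := Finset.card_insert_of_notMem h2
    rw [h1, hcardm] at this
    omega
  -- now the number n = p * m
  have hcopn : Nat.Coprime p m := (hp.coprime_iff_not_dvd).mpr hpm
  have hnpos : 0 < p * m := Nat.mul_pos hp.pos hmpos
  have hcardn : (p * m).divisors.card = 4 * q := by
    rw [hcopn.card_divisors_mul, hp.divisors,
      Finset.card_insert_of_notMem (by simp only [Finset.mem_singleton]; exact fun h => hp.ne_one h.symm), Finset.card_singleton, hcardm]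
    ring
  have hcardpn : (p * m).properDivisors.card = 4 * q - 1 := by
    have h1 : insert (p * m) (p * m).properDivisors = (p * m).divisors :=
      Nat.insert_self_properDivisors hnpos.ne'
    have h2 : p * m ∉ (p * m).properDivisors := Nat.self_notMem_properDivisors
    have := Finset.card_insert_of_notMem h2
    rw [h1, hcardn] at this
    omega
  -- the set S
  set S := m.properDivisors.image (p * ·) with hSdef
  have hinj : Function.Injective (p * ·) := fun a b h => by
    simpa [Nat.mul_left_cancel_iff hp.pos] using h
  have hSsub : S ⊆ (p * m).properDivisors := by
    intro x hx
    simp only [hSdef, Finset.mem_image] at hx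
    obtain ⟨d, hd, rfl⟩ := hx
    rw [Nat.mem_properDivisors] at hd ⊢
    exact ⟨mul_dvd_mul_left p hd.1, by have := hd.2; exact Nat.mul_lt_mul_of_le_of_lt (le_refl p) this hp.pos⟩
  have hScard : S.card = 2 * q - 1 := by
    rw [hSdef, Finset.card_image_of_injective _ hinj, hcardpm]
  have hSsum : ∑ d ∈ S, d = p * m := by
    rw [hSdef, Finset.sum_image (fun a _ b _ h => hinj h), ← Finset.mul_sum, hsumm]
  refine ⟨⟨S, hSsub, hScard, hSsum⟩, ⟨(p * m).properDivisors \ S, Finset.sdiff_subset, ?_, ?_⟩⟩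
  · rw [Finset.card_sdiff_of_subset hSsub, hcardpn, hScard]; omega
  · rw [Finset.sdiff_sdiff_eq_self hSsub, hSsum]
end

section
/- Let a_j ≥ 2 be an integer and s > a_j. Then ∑_{m ≤ x, Ω(m) = s − a_j} m^{−1/a_j} = o(x^{1 − 1/a_j} (log log x)^{s−1} / log x) as x → ∞. -/
open Finset Real Filter Topology
open scoped Nat ArithmeticFunction.Omega

/-!
Put `α = 1 / a ≤ 1 / 2` and `S_r(y) = ∑_{m ≤ y, Ω(m) = r} m^{-α}`. Writing `m = p k` with `p` the
least prime factor of `m`, so that `p ≤ √y` once `Ω(m) ≥ 2`, gives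
`S_{r+1}(y) ≤ ∑_{p ≤ √y} p^{-α} S_r(y / p)`. Since `log (y / p) ≥ (log y) / 2` for these `p`,
induction on `r` with the Mertens-type bound `∑_{p ≤ y} 1 / p ≪ log log y` yields
`S_r(y) ≪ y^{1-α} L(y)^{r-1} / log y`, where `L(y) = max 1 (log log y)` keeps the bound meaningful
for small `y`. The case `r = 1`, `∑_{p ≤ y} p^{-α} ≪ y^{1-α} / log y`, follows from Chebyshev's
`π(y) ≪ y / log y` by halving `y`. For `r = s - a` the bound is smaller than the normalising factor
by `(log log x)^a`.
-/

theorem primeCounting_floor_le {x : ℝ} (hx : 1 < x) :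
    (Nat.primeCounting ⌊x⌋₊ : ℝ) ≤ 5 * x / log x := by
  have hlog : 0 < log x := log_pos hx
  have hsqrt : √x * log x ≤ 2 * x := by
    have h := log_le_sub_one_of_pos (sqrt_pos.2 (by linarith : 0 < x))
    rw [log_sqrt (by linarith)] at h
    nlinarith [sq_sqrt (show 0 ≤ x by linarith), sqrt_nonneg x]
  have hlog4 : log 4 < 1.39 := by
    rw [show (4 : ℝ) = 2 ^ 2 by norm_num, log_pow]
    linarith [log_two_lt_d9]
  calc (Nat.primeCounting ⌊x⌋₊ : ℝ) ≤ log 4 * x / log √x + √x := Chebyshev.pi_le_log4_mul_div hx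
    _ = (2 * log 4 * x + √x * log x) / log x := by
      rw [log_sqrt (by linarith)]
      field_simp
    _ ≤ 5 * x / log x := by
      gcongr
      nlinarith

theorem sum_primesLE_log_div_le (n : ℕ) :
    ∑ p ∈ Nat.primesLE n, log p / p ≤ log n + log 4 := by
  rcases n.eq_zero_or_pos with rfl | hn
  · simp only [Nat.primesLE_zero, sum_empty, Nat.cast_zero, log_zero, zero_add]
    positivity
  -- Legendre: `v_p(n!) ≥ ⌊n / p⌋`, so `n ∑ log p / p - θ(n) ≤ log n! ≤ n log n`.
  have hfactorial : log (n ! : ℕ) = ∑ p ∈ Nat.primesLE n, (n !).factorization p * log p := by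
    rw [log_nat_eq_sum_factorization]
    refine Finsupp.sum_of_support_subset _ (fun p hp => ?_) _ (fun _ _ => by simp)
    rw [Nat.support_factorization, Nat.mem_primeFactors] at hp
    exact Nat.mem_primesLE.2 ⟨(hp.1.dvd_factorial).1 hp.2.1, hp.1⟩
  have hlegendre : ∀ p ∈ Nat.primesLE n,
      ((n : ℝ) / p - 1) * log p ≤ (n !).factorization p * log p := by
    intro p hp
    obtain ⟨hpn, hp⟩ := Nat.mem_primesLE.1 hp
    have hdiv : n / p ≤ (n !).factorization p := by
      rw [Nat.factorization_factorial hp (Nat.lt_succ_self _)]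
      simpa using single_le_sum (f := fun i => n / p ^ i) (fun _ _ => Nat.zero_le _)
        (mem_Ico.2 ⟨le_rfl, Nat.succ_lt_succ (Nat.log_pos hp.one_lt hpn)⟩)
    gcongr
    calc (n : ℝ) / p - 1 ≤ ⌊(n : ℝ) / p⌋₊ := (Nat.sub_one_lt_floor _).le
      _ ≤ (n !).factorization p := by rw [Nat.floor_div_eq_div]; exact_mod_cast hdiv
  have hlog_factorial : log (n ! : ℕ) ≤ n * log n := by
    rw [← log_pow]
    exact log_le_log (by positivity) (by exact_mod_cast Nat.factorial_le_pow n)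
  have htheta : ∑ p ∈ Nat.primesLE n, log p ≤ log 4 * n := by
    rw [← Chebyshev.theta_eq_sum_primesLE_log]
    exact Chebyshev.theta_le_log4_mul_x (by positivity)
  have key : (n : ℝ) * ∑ p ∈ Nat.primesLE n, log p / p ≤ n * (log n + log 4) :=
    calc (n : ℝ) * ∑ p ∈ Nat.primesLE n, log p / p
        = ∑ p ∈ Nat.primesLE n, ((n : ℝ) / p - 1) * log p + ∑ p ∈ Nat.primesLE n, log p := by
          rw [mul_sum, ← sum_add_distrib]
          exact sum_congr rfl fun p _ => by ring
      _ ≤ log (n ! : ℕ) + log 4 * n := by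
          rw [hfactorial]
          exact add_le_add (sum_le_sum hlegendre) htheta
      _ ≤ n * (log n + log 4) := by linarith
  exact le_of_mul_le_mul_left key (by positivity)

theorem floor_lt_floor_of_add_one_le {x y : ℝ} (hy : 0 ≤ y) (h : y + 1 ≤ x) : ⌊y⌋₊ < ⌊x⌋₊ := by
  rw [← Nat.succ_le_iff, Nat.succ_eq_add_one, ← Nat.floor_add_one hy]
  exact Nat.floor_le_floor h

theorem sum_primesLE_floor_eq_add {M : Type*} [AddCommMonoid M] {x y : ℝ} (hyx : y ≤ x)
    (f : ℕ → M) :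
    ∑ p ∈ Nat.primesLE ⌊x⌋₊, f p =
      ∑ p ∈ Nat.primesLE ⌊y⌋₊, f p + ∑ p ∈ Nat.primesLE ⌊x⌋₊ with y < (p : ℕ), f p := by
  rw [← sum_filter_add_sum_filter_not _ (fun p : ℕ => (p : ℝ) ≤ y)]
  congr 1
  · refine sum_congr (ext fun p => ?_) fun _ _ => rfl
    simp only [mem_filter, Nat.mem_primesLE]
    constructor
    · rintro ⟨⟨-, hp⟩, hpy⟩
      exact ⟨(Nat.le_floor_iff' hp.ne_zero).2 hpy, hp⟩
    · rintro ⟨hpy, hp⟩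
      have hpy := (Nat.le_floor_iff' hp.ne_zero).1 hpy
      exact ⟨⟨(Nat.le_floor_iff' hp.ne_zero).2 (hpy.trans hyx), hp⟩, hpy⟩
  · simp only [not_le]

theorem sum_primesLE_inv_sqrt_lt_le {x : ℝ} (hx : 1 < x) :
    ∑ p ∈ Nat.primesLE ⌊x⌋₊ with √x < (p : ℕ), (p : ℝ)⁻¹ ≤ 2 + 2 * log 4 / log x := by
  have hlog : 0 < log x := log_pos hx
  have hterm : ∀ p ∈ {p ∈ Nat.primesLE ⌊x⌋₊ | √x < (p : ℕ)},
      (p : ℝ)⁻¹ ≤ 2 / log x * (log p / p) := by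
    intro p hp
    have hp0 : (0 : ℝ) < p := lt_of_le_of_lt (sqrt_nonneg x) (mem_filter.1 hp).2
    have hlogp : log x / 2 < log p := by
      rw [← log_sqrt (by linarith)]
      exact log_lt_log (sqrt_pos.2 (by linarith)) (mem_filter.1 hp).2
    rw [div_mul_div_comm, le_div_iff₀ (by positivity), inv_mul_eq_div, mul_div_assoc,
      div_self hp0.ne', mul_one]
    linarith
  calc ∑ p ∈ Nat.primesLE ⌊x⌋₊ with √x < (p : ℕ), (p : ℝ)⁻¹
      ≤ ∑ p ∈ Nat.primesLE ⌊x⌋₊ with √x < (p : ℕ), 2 / log x * (log p / p) := sum_le_sum hterm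
    _ ≤ ∑ p ∈ Nat.primesLE ⌊x⌋₊, 2 / log x * (log p / p) :=
        sum_le_sum_of_subset_of_nonneg (filter_subset _ _) fun p _ _ => by
          have := log_natCast_nonneg p
          positivity
    _ ≤ 2 / log x * (log x + log 4) := by
        rw [← mul_sum]
        gcongr
        have hfloor : log ⌊x⌋₊ ≤ log x :=
          log_le_log (by exact_mod_cast Nat.floor_pos.2 hx.le) (Nat.floor_le (by linarith))
        linarith [sum_primesLE_log_div_le ⌊x⌋₊]
    _ = 2 + 2 * log 4 / log x := by field_simp

theorem sum_primesLE_inv_le {x : ℝ} (hx : 3 ≤ x) :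
    ∑ p ∈ Nat.primesLE ⌊x⌋₊, (p : ℝ)⁻¹ ≤ 5 * log (log x) + 2 := by
  induction h : ⌊x⌋₊ using Nat.strong_induction_on generalizing x with
  | _ n ih =>
  subst h
  have hloglog : 0 ≤ log (log x) := by
    refine log_nonneg ((le_log_iff_exp_le (by linarith)).2 ?_)
    linarith [exp_one_lt_d9]
  rcases lt_or_ge x 16 with hx16 | hx16
  · have hsub : Nat.primesLE ⌊x⌋₊ ⊆ ({2, 3, 5, 7, 11, 13} : Finset ℕ) := by
      rw [show ({2, 3, 5, 7, 11, 13} : Finset ℕ) = Nat.primesLE 15 by decide]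
      exact Nat.primesLE_mono
        (Nat.le_of_lt_succ ((Nat.floor_lt (by linarith)).2 (by simpa using hx16)))
    calc ∑ p ∈ Nat.primesLE ⌊x⌋₊, (p : ℝ)⁻¹ ≤ ∑ p ∈ ({2, 3, 5, 7, 11, 13} : Finset ℕ), (p : ℝ)⁻¹ :=
          sum_le_sum_of_subset_of_nonneg hsub fun _ _ _ => by positivity
      _ ≤ 5 * log (log x) + 2 := by norm_num; linarith
  · have hsqrt : 4 ≤ √x := le_sqrt_of_sq_le (by linarith)
    have hlt : ⌊√x⌋₊ < ⌊x⌋₊ := floor_lt_floor_of_add_one_le (sqrt_nonneg x) (by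
      nlinarith [sq_sqrt (show 0 ≤ x by linarith)])
    have hhead := ih _ hlt (by linarith) rfl
    have htail := sum_primesLE_inv_sqrt_lt_le (by linarith : 1 < x)
    have hlog4 : 2 * log 4 / log x ≤ 1 := by
      have h16 : log 16 = 2 * log 4 := by
        rw [show (16 : ℝ) = 4 ^ 2 by norm_num, log_pow]; norm_num
      rw [div_le_one (log_pos (by linarith))]
      linarith [log_le_log (by norm_num) hx16]
    -- Passing from `x` to `√x` lowers `5 log log x` by `5 log 2 > 3`, which pays for `htail`.
    rw [log_sqrt (by linarith), log_div (log_pos (by linarith)).ne' two_ne_zero] at hhead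
    rw [sum_primesLE_floor_eq_add (sqrt_le_self_iff.2 (Or.inr (by linarith)))]
    linarith [log_two_gt_d9]

theorem sum_rpow_neg_le_card_mul {s : Finset ℕ} {α y : ℝ} (hα : 0 ≤ α) (hy : 0 < y)
    (h : ∀ p ∈ s, y ≤ p) : ∑ p ∈ s, (p : ℝ) ^ (-α) ≤ #s * y ^ (-α) := by
  rw [← nsmul_eq_mul]
  exact sum_le_card_nsmul _ _ _ fun p hp => rpow_le_rpow_of_nonpos hy (h p hp) (by linarith)

theorem sum_primesLE_half_lt_rpow_neg_le {α : ℝ} (hα0 : 0 ≤ α) (hα1 : α ≤ 1) {x : ℝ}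
    (hx : 1 < x) :
    ∑ p ∈ Nat.primesLE ⌊x⌋₊ with x / 2 < (p : ℕ), (p : ℝ) ^ (-α) ≤ 10 * x ^ (1 - α) / log x := by
  have hx0 : 0 < x := by linarith
  have hlog : 0 < log x := log_pos hx
  calc _ ≤ #{p ∈ Nat.primesLE ⌊x⌋₊ | x / 2 < (p : ℕ)} * (x / 2) ^ (-α) :=
        sum_rpow_neg_le_card_mul hα0 (by positivity) fun p hp => (mem_filter.1 hp).2.le
    _ ≤ 5 * x / log x * (2 * x ^ (-α)) := by
        gcongr
        · refine (Nat.cast_le.2 (card_filter_le _ _)).trans ?_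
          rw [Nat.primesLE_card_eq_primeCounting]
          exact primeCounting_floor_le hx
        · rw [div_rpow hx0.le zero_le_two, rpow_neg zero_le_two, div_inv_eq_mul, mul_comm]
          gcongr
          exact (rpow_le_rpow_of_exponent_le one_le_two hα1).trans_eq (rpow_one 2)
    _ = 10 * x ^ (1 - α) / log x := by
        rw [sub_eq_add_neg, rpow_add hx0, rpow_one]
        ring

theorem rpow_div_two_div_log_le {α x : ℝ} (hα : α ≤ 1 / 2) (hx : 16 ≤ x) :
    (x / 2) ^ (1 - α) / log (x / 2) ≤ 20 / 21 * (x ^ (1 - α) / log x) := by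
  have hx0 : 0 < x := by linarith
  have hlog : 0 < log x := log_pos (by linarith)
  have h2 : 7 / 5 ≤ (2 : ℝ) ^ (1 - α) := calc
    (7 / 5 : ℝ) ≤ √2 := le_sqrt_of_sq_le (by norm_num)
    _ = 2 ^ (1 / 2 : ℝ) := sqrt_eq_rpow 2
    _ ≤ 2 ^ (1 - α) := rpow_le_rpow_of_exponent_le (by norm_num) (by linarith)
  have hlog2 : 3 / 4 * log x ≤ log x - log 2 := by
    have : 4 * log 2 ≤ log x := by
      rw [← log_rpow two_pos]
      exact log_le_log (by positivity) (by norm_num; linarith)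
    linarith
  calc (x / 2) ^ (1 - α) / log (x / 2) = x ^ (1 - α) / 2 ^ (1 - α) / (log x - log 2) := by
        rw [div_rpow hx0.le zero_le_two, log_div hx0.ne' two_ne_zero]
    _ ≤ x ^ (1 - α) / (7 / 5) / (3 / 4 * log x) := by gcongr
    _ = 20 / 21 * (x ^ (1 - α) / log x) := by field_simp; ring

theorem sum_primesLE_rpow_neg_le {α : ℝ} (hα0 : 0 ≤ α) (hα : α ≤ 1 / 2) {x : ℝ} (hx : 2 ≤ x) :
    ∑ p ∈ Nat.primesLE ⌊x⌋₊, (p : ℝ) ^ (-α) ≤ 256 * x ^ (1 - α) / log x := by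
  induction h : ⌊x⌋₊ using Nat.strong_induction_on generalizing x with
  | _ n ih =>
  subst h
  have hx0 : 0 < x := by linarith
  have hlog : 0 < log x := log_pos (by linarith)
  rcases lt_or_ge x 16 with hx16 | hx16
  · have hx4 : x ≤ 4 * x ^ (1 - α) := by
      have : x ^ α ≤ 4 := calc
        x ^ α ≤ x ^ (1 / 2 : ℝ) := rpow_le_rpow_of_exponent_le (by linarith) hα
        _ ≤ 16 ^ (1 / 2 : ℝ) := by gcongr
        _ = 4 := by rw [← sqrt_eq_rpow, show (16 : ℝ) = 4 ^ 2 by norm_num, sqrt_sq (by norm_num)]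
      calc x = x ^ α * x ^ (1 - α) := by rw [← rpow_add hx0, add_sub_cancel, rpow_one]
        _ ≤ 4 * x ^ (1 - α) := by gcongr
    calc ∑ p ∈ Nat.primesLE ⌊x⌋₊, (p : ℝ) ^ (-α)
        ≤ #(Nat.primesLE ⌊x⌋₊) * 1 ^ (-α) := sum_rpow_neg_le_card_mul hα0 one_pos
          fun p hp => by exact_mod_cast (Nat.prime_of_mem_primesLE hp).one_lt.le
      _ ≤ 5 * x / log x := by
          rw [one_rpow, mul_one, Nat.primesLE_card_eq_primeCounting]
          exact primeCounting_floor_le (by linarith)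
      _ ≤ 256 * x ^ (1 - α) / log x := div_le_div_of_nonneg_right (by linarith) hlog.le
  · have hhead := ih _ (floor_lt_floor_of_add_one_le (by positivity) (by linarith))
      (by linarith : 2 ≤ x / 2) rfl
    rw [sum_primesLE_floor_eq_add (by linarith : x / 2 ≤ x)]
    calc _ ≤ 256 * (20 / 21 * (x ^ (1 - α) / log x)) + 10 * x ^ (1 - α) / log x := by
          refine add_le_add (hhead.trans ?_)
            (sum_primesLE_half_lt_rpow_neg_le hα0 (by linarith) (by linarith))
          rw [mul_div_assoc]
          gcongr
          exact rpow_div_two_div_log_le hα hx16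
      _ = 256 * (x ^ (1 - α) / log x) - 46 / 21 * (x ^ (1 - α) / log x) := by ring
      _ ≤ 256 * x ^ (1 - α) / log x := by
          rw [mul_div_assoc]
          exact sub_le_self _ (by positivity)

def almostPrimesLE (k n : ℕ) : Finset ℕ := {m ∈ Icc 1 n | Ω m = k}

theorem mem_almostPrimesLE {k n m : ℕ} : m ∈ almostPrimesLE k n ↔ 1 ≤ m ∧ m ≤ n ∧ Ω m = k := by
  simp [almostPrimesLE, and_assoc]

theorem almostPrimesLE_one (n : ℕ) : almostPrimesLE 1 n = Nat.primesLE n := by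
  ext m
  simp only [mem_almostPrimesLE, Nat.mem_primesLE, ArithmeticFunction.cardFactors_eq_one_iff_prime]
  exact ⟨fun h => ⟨h.2.1, h.2.2⟩, fun h => ⟨h.2.one_lt.le, h⟩⟩

theorem sum_almostPrimesLE_succ_le {f : ℕ → ℝ} (hf : ∀ m, 0 ≤ f m) {r : ℕ} (hr : r ≠ 0) (n : ℕ) :
    ∑ m ∈ almostPrimesLE (r + 1) n, f m ≤
      ∑ p ∈ Nat.primesLE n.sqrt, ∑ k ∈ almostPrimesLE r (n / p), f (p * k) := by
  set T := (Nat.primesLE n.sqrt).sigma fun p => almostPrimesLE r (n / p)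
  have hcover : almostPrimesLE (r + 1) n ⊆ T.image fun q => q.1 * q.2 := by
    intro m hm
    obtain ⟨hm1, hmn, hΩ⟩ := mem_almostPrimesLE.1 hm
    have hm_ne_one : m ≠ 1 := by rintro rfl; simp at hΩ
    have hp := Nat.minFac_prime hm_ne_one
    have hm_not_prime : ¬ m.Prime := by
      rw [← ArithmeticFunction.cardFactors_eq_one_iff_prime, hΩ]; omega
    -- `m` is `p * (m / p)` for its least prime factor `p`, and `p ^ 2 ≤ m` as `m` is not prime.
    have hmul : m.minFac * (m / m.minFac) = m := Nat.mul_div_cancel' m.minFac_dvd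
    have hquot : m / m.minFac ≠ 0 := by rintro h; rw [h] at hmul; omega
    refine mem_image.2 ⟨⟨m.minFac, m / m.minFac⟩, mem_sigma.2 ⟨?_, ?_⟩, hmul⟩
    · exact Nat.mem_primesLE.2
        ⟨Nat.le_sqrt'.2 ((Nat.minFac_sq_le_self hm1 hm_not_prime).trans hmn), hp⟩
    · refine mem_almostPrimesLE.2 ⟨Nat.one_le_iff_ne_zero.2 hquot, Nat.div_le_div_right hmn, ?_⟩
      have hΩ' : Ω (m.minFac * (m / m.minFac)) = r + 1 := by rw [hmul, hΩ]
      rw [ArithmeticFunction.cardFactors_mul hp.ne_zero hquot,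
        ArithmeticFunction.cardFactors_apply_prime hp] at hΩ'
      show Ω (m / m.minFac) = r
      omega
  calc ∑ m ∈ almostPrimesLE (r + 1) n, f m ≤ ∑ m ∈ T.image fun q => q.1 * q.2, f m :=
        sum_le_sum_of_subset_of_nonneg hcover fun _ _ _ => hf _
    _ ≤ ∑ q ∈ T, f (q.1 * q.2) := sum_image_le_of_nonneg fun _ _ => hf _
    _ = _ := sum_sigma _ _ _

theorem sum_almostPrimesLE_succ_rpow_neg_le (α : ℝ) {r : ℕ} (hr : r ≠ 0) (y : ℝ) :
    ∑ m ∈ almostPrimesLE (r + 1) ⌊y⌋₊, (m : ℝ) ^ (-α) ≤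
      ∑ p ∈ Nat.primesLE (Nat.sqrt ⌊y⌋₊),
        (p : ℝ) ^ (-α) * ∑ k ∈ almostPrimesLE r ⌊y / p⌋₊, (k : ℝ) ^ (-α) := by
  refine (sum_almostPrimesLE_succ_le (fun _ => by positivity) hr _).trans_eq
    (sum_congr rfl fun p _ => ?_)
  rw [← Nat.floor_div_natCast, mul_sum]
  refine sum_congr rfl fun k _ => ?_
  rw [Nat.cast_mul, mul_rpow (by positivity) (by positivity)]

theorem sum_primesLE_sqrt_floor_inv_le {y : ℝ} (hy : 0 ≤ y) :
    ∑ p ∈ Nat.primesLE (Nat.sqrt ⌊y⌋₊), (p : ℝ)⁻¹ ≤ 7 * max 1 (log (log y)) := by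
  have hG := le_max_left 1 (log (log y))
  rcases lt_or_ge y 3 with hy3 | hy3
  · have hempty : Nat.primesLE (Nat.sqrt ⌊y⌋₊) = ∅ := by
      refine subset_empty.1 (Nat.primesLE_one ▸ Nat.primesLE_mono ?_)
      have : ⌊y⌋₊ < 4 := (Nat.floor_lt hy).2 (by norm_num; linarith)
      exact Nat.lt_succ_iff.1 (Nat.sqrt_lt'.2 this)
    rw [hempty, sum_empty]
    linarith
  · calc ∑ p ∈ Nat.primesLE (Nat.sqrt ⌊y⌋₊), (p : ℝ)⁻¹ ≤ ∑ p ∈ Nat.primesLE ⌊y⌋₊, (p : ℝ)⁻¹ :=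
          sum_le_sum_of_subset_of_nonneg (Nat.primesLE_mono (Nat.sqrt_le_self _))
            fun _ _ _ => by positivity
      _ ≤ 5 * log (log y) + 2 := sum_primesLE_inv_le hy3
      _ ≤ 7 * max 1 (log (log y)) := by linarith [le_max_right 1 (log (log y))]

theorem rpow_neg_mul_le_of_sq_le {α C y z : ℝ} (r : ℕ) (hC : 0 ≤ C) (hz : 1 < z)
    (hzy : z ^ 2 ≤ y) :
    z ^ (-α) * (C * (y / z) ^ (1 - α) * max 1 (log (log (y / z))) ^ r / log (y / z)) ≤
      2 * C * y ^ (1 - α) * max 1 (log (log y)) ^ r / log y * z⁻¹ := by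
  have hz0 : 0 < z := by linarith
  have hzyz : z ≤ y / z := by rw [le_div_iff₀ hz0]; nlinarith
  have hy : 1 < y := by nlinarith
  have hlog : log y / 2 ≤ log (y / z) := by
    have : 2 * log z ≤ log y := by
      rw [← log_rpow hz0]
      exact log_le_log (by positivity) (by exact_mod_cast hzy)
    rw [log_div (by positivity) hz0.ne']
    linarith
  have hmax : max 1 (log (log (y / z))) ≤ max 1 (log (log y)) :=
    max_le_max le_rfl (log_le_log (log_pos (by linarith))
      (log_le_log (by linarith) (div_le_self (by linarith) hz.le)))
  have hpow : z ^ (-α) * (y / z) ^ (1 - α) = y ^ (1 - α) * z⁻¹ := by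
    rw [div_rpow (by linarith) hz0.le, mul_div_assoc', mul_comm, mul_div_assoc, ← rpow_sub hz0,
      show -α - (1 - α) = -1 by ring, rpow_neg_one]
  calc z ^ (-α) * (C * (y / z) ^ (1 - α) * max 1 (log (log (y / z))) ^ r / log (y / z))
      = C * (y ^ (1 - α) * z⁻¹) * max 1 (log (log (y / z))) ^ r / log (y / z) := by
        rw [← hpow]; ring
    _ ≤ C * (y ^ (1 - α) * z⁻¹) * max 1 (log (log y)) ^ r / (log y / 2) := by
        have := log_pos hy
        gcongr
    _ = 2 * C * y ^ (1 - α) * max 1 (log (log y)) ^ r / log y * z⁻¹ := by ring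

theorem exists_sum_almostPrimesLE_rpow_neg_le {α : ℝ} (hα0 : 0 ≤ α) (hα : α ≤ 1 / 2) (r : ℕ) :
    ∃ C, 0 ≤ C ∧ ∀ y, 2 ≤ y → ∑ m ∈ almostPrimesLE (r + 1) ⌊y⌋₊, (m : ℝ) ^ (-α) ≤
      C * y ^ (1 - α) * max 1 (log (log y)) ^ r / log y := by
  induction r with
  | zero => exact ⟨256, by norm_num, fun y hy => by
      simpa [almostPrimesLE_one] using sum_primesLE_rpow_neg_le hα0 hα hy⟩
  | succ r ih =>
    obtain ⟨C, hC0, hC⟩ := ih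
    refine ⟨14 * C, by positivity, fun y hy => ?_⟩
    set B := 2 * C * y ^ (1 - α) * max 1 (log (log y)) ^ r / log y
    have hB : 0 ≤ B := by
      have := log_pos (by linarith : (1 : ℝ) < y)
      positivity
    have hterm : ∀ p ∈ Nat.primesLE (Nat.sqrt ⌊y⌋₊), (p : ℝ) ^ (-α) *
        ∑ k ∈ almostPrimesLE (r + 1) ⌊y / p⌋₊, (k : ℝ) ^ (-α) ≤ B * (p : ℝ)⁻¹ := by
      intro p hp
      obtain ⟨hpy, hp⟩ := Nat.mem_primesLE.1 hp
      have hp2 : (2 : ℝ) ≤ p := by exact_mod_cast hp.two_le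
      have hpy : (p : ℝ) ^ 2 ≤ y :=
        (by exact_mod_cast Nat.le_sqrt'.1 hpy : (p : ℝ) ^ 2 ≤ ⌊y⌋₊).trans
          (Nat.floor_le (by linarith))
      refine le_trans ?_ (rpow_neg_mul_le_of_sq_le r hC0 (by linarith) hpy)
      gcongr
      exact hC _ ((le_div_iff₀ (by linarith)).2 (by nlinarith))
    calc ∑ m ∈ almostPrimesLE (r + 1 + 1) ⌊y⌋₊, (m : ℝ) ^ (-α)
        ≤ ∑ p ∈ Nat.primesLE (Nat.sqrt ⌊y⌋₊),
            (p : ℝ) ^ (-α) * ∑ k ∈ almostPrimesLE (r + 1) ⌊y / p⌋₊, (k : ℝ) ^ (-α) :=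
          sum_almostPrimesLE_succ_rpow_neg_le α (Nat.succ_ne_zero r) y
      _ ≤ ∑ p ∈ Nat.primesLE (Nat.sqrt ⌊y⌋₊), B * (p : ℝ)⁻¹ := sum_le_sum hterm
      _ ≤ B * (7 * max 1 (log (log y))) := by
          rw [← mul_sum]
          gcongr
          exact sum_primesLE_sqrt_floor_inv_le (by linarith)
      _ = 14 * C * y ^ (1 - α) * max 1 (log (log y)) ^ (r + 1) / log y := by ring

theorem sum_inv_pow_omega_little_o (a s : ℕ) (ha : 2 ≤ a) (hs : a < s) :
    Filter.Tendsto (fun x : ℝ =>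
      (∑ m ∈ (Finset.Icc 1 ⌊x⌋₊).filter (fun m => m.primeFactorsList.length = s - a),
          (m : ℝ) ^ (-(1 : ℝ) / a)) /
        (x ^ (1 - (1 : ℝ) / a) * (Real.log (Real.log x)) ^ (s - 1) / Real.log x))
      Filter.atTop (nhds 0) := by
  obtain ⟨r, hr⟩ : ∃ r, s - a = r + 1 := ⟨s - a - 1, by omega⟩
  have hsum : ∀ x : ℝ, ∑ m ∈ (Icc 1 ⌊x⌋₊).filter (fun m => m.primeFactorsList.length = s - a),
      (m : ℝ) ^ (-(1 : ℝ) / a) = ∑ m ∈ almostPrimesLE (r + 1) ⌊x⌋₊, (m : ℝ) ^ (-(1 / a : ℝ)) := by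
    intro x
    rw [hr, neg_div]
    rfl
  obtain ⟨C, -, hC⟩ := exists_sum_almostPrimesLE_rpow_neg_le (α := 1 / a) (by positivity)
    (one_div_le_one_div_of_le two_pos (by exact_mod_cast ha)) r
  have hloglog : Tendsto (fun x : ℝ => log (log x)) atTop atTop :=
    tendsto_log_atTop.comp tendsto_log_atTop
  have hlim : Tendsto (fun x => C / log (log x) ^ a) atTop (𝓝 0) :=
    tendsto_const_nhds.div_atTop ((tendsto_pow_atTop (by omega)).comp hloglog)
  simp only [hsum]
  refine tendsto_of_tendsto_of_tendsto_of_le_of_le' tendsto_const_nhds hlim ?_ ?_ <;>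
    filter_upwards [hloglog.eventually_ge_atTop 1, eventually_ge_atTop 2] with x hL hx <;>
    have hlog : 0 < log x := log_pos (by linarith)
  · have : 0 ≤ ∑ m ∈ almostPrimesLE (r + 1) ⌊x⌋₊, (m : ℝ) ^ (-(1 / a : ℝ)) :=
      sum_nonneg fun _ _ => by positivity
    positivity
  · rw [div_le_iff₀ (by positivity)]
    calc _ ≤ C * x ^ (1 - (1 : ℝ) / a) * max 1 (log (log x)) ^ r / log x := hC x hx
      _ = C / log (log x) ^ a * (x ^ (1 - (1 : ℝ) / a) * log (log x) ^ (s - 1) / log x) := by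
        rw [max_eq_right hL, show s - 1 = r + a by omega, pow_add]
        field_simp
end

section
/- Let m' be a squarefree number coprime to m, with s := Ω(m'), and suppose m ∈ N(k) is a sum of j proper divisors of m where j + k ≥ τ(m) − 1. Then n = m·m' is a sum of j of its proper divisors, and the number of remaining (redundant) proper divisors of n is τ(m)·2^s − 1 − j ≤ τ(m)(2^s − 1) + k; hence n ∈ N(τ(m)(2^s − 1) + k). -/
theorem near_perfect_times_squarefree (m m' k j : ℕ) (hm : 0 < m)
    (hm' : Squarefree m') (hcop : Nat.Coprime m m')
    (s : ℕ) (hs : m'.primeFactorsList.length = s)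
    (T : Finset ℕ) (hT : T ⊆ m.properDivisors) (hTcard : T.card = j)
    (hTsum : ∑ d ∈ T, d = m)
    (hjk : m.divisors.card - 1 ≤ j + k) :
    (∃ S ⊆ (m * m').properDivisors, S.card = j ∧ ∑ d ∈ S, d = m * m') ∧
    (m * m').properDivisors.card - j = m.divisors.card * 2 ^ s - 1 - j ∧
    m.divisors.card * 2 ^ s - 1 - j ≤ m.divisors.card * (2 ^ s - 1) + k ∧
    ∃ D ⊆ (m * m').properDivisors,
      D.card ≤ m.divisors.card * (2 ^ s - 1) + k ∧
      ArithmeticFunction.sigma 1 (m * m') = 2 * (m * m') + ∑ d ∈ D, d := by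
  have hm'0 : 0 < m' := Nat.pos_of_ne_zero hm'.ne_zero
  have hmm'0 : 0 < m * m' := Nat.mul_pos hm hm'0
  -- τ(m') = 2 ^ s
  have hτm' : m'.divisors.card = 2 ^ s := by
    rw [Nat.card_divisors hm'0.ne']
    have hnodup : m'.primeFactorsList.Nodup :=
      (Nat.squarefree_iff_nodup_primeFactorsList hm'0.ne').mp hm'
    have hcard : m'.primeFactors.card = s := by
      rw [Nat.primeFactors, List.toFinset_card_of_nodup hnodup, hs]
    calc m'.primeFactors.prod (m'.factorization · + 1)
        = m'.primeFactors.prod (fun _ => 2) := by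
          apply Finset.prod_congr rfl
          intro p hp
          have h1 : m'.factorization p = 1 :=
            (hm'.natFactorization_le_one p).antisymm
              ((Nat.Prime.factorization_pos_of_dvd (Nat.prime_of_mem_primeFactors hp)
                hm'0.ne' (Nat.dvd_of_mem_primeFactors hp)))
          omega
      _ = 2 ^ s := by rw [Finset.prod_const, hcard]
  have hτ : (m * m').divisors.card = m.divisors.card * 2 ^ s := by
    rw [Nat.Coprime.card_divisors_mul hcop, hτm']
  have hτpos : 0 < m.divisors.card := by
    exact Finset.card_pos.mpr ⟨m, Nat.mem_divisors_self m hm.ne'⟩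
  -- construct S
  set S : Finset ℕ := T.image (· * m') with hS
  have hScard : S.card = j := by
    rw [hS, Finset.card_image_of_injective _ (fun a b h => Nat.eq_of_mul_eq_mul_right hm'0 h),
      hTcard]
  have hSsub : S ⊆ (m * m').properDivisors := by
    intro x hx
    simp only [hS, Finset.mem_image] at hx
    obtain ⟨d, hd, rfl⟩ := hx
    have hd' := Nat.mem_properDivisors.mp (hT hd)
    exact Nat.mem_properDivisors.mpr ⟨mul_dvd_mul hd'.1 dvd_rfl,
      by exact (Nat.mul_lt_mul_right hm'0).mpr hd'.2⟩
  have hSsum : ∑ d ∈ S, d = m * m' := by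
    rw [hS, Finset.sum_image (fun a _ b _ h => Nat.eq_of_mul_eq_mul_right hm'0 h),
      ← Finset.sum_mul, hTsum]
  have hpc : (m * m').properDivisors.card = m.divisors.card * 2 ^ s - 1 := by
    have := Nat.insert_self_properDivisors (n := m * m') hmm'0.ne'
    have hns : m * m' ∉ (m * m').properDivisors := Nat.self_notMem_properDivisors
    have : (m * m').divisors.card = (m * m').properDivisors.card + 1 := by
      rw [← this, Finset.card_insert_of_notMem hns]
    omega
  have key : m.divisors.card * 2 ^ s = m.divisors.card * (2 ^ s - 1) + m.divisors.card := by
    conv_lhs => rw [show (2:ℕ) ^ s = (2 ^ s - 1) + 1 from (Nat.sub_add_cancel Nat.one_le_two_pow).symm]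
    rw [Nat.mul_add, Nat.mul_one]
  refine ⟨⟨S, hSsub, hScard, hSsum⟩, ?_, ?_, ?_⟩
  · rw [hpc]
  · omega
  · refine ⟨(m * m').properDivisors \ S, Finset.sdiff_subset, ?_, ?_⟩
    · rw [Finset.card_sdiff_of_subset hSsub, hpc, hScard]
      omega
    · rw [ArithmeticFunction.sigma_one_apply, Nat.sum_divisors_eq_sum_properDivisors_add_self,
        ← Finset.sum_sdiff hSsub, hSsum]
      ring
end

section
/- Let n ∈ N(k) with n = pm, p = P⁺(n) prime, p ∤ m, p > P⁺(m), and suppose σ(n) = 2n + ∑_{d∈D} d with |D| ≤ k. Writing D₁ = {d ∈ D : p ∤ d} and D₂ = {d/p : d ∈ D, p | d}, one has (1+p)σ(m) = 2pm + ∑_{d∈D₁} d + p∑_{d∈D₂} d, and hence p divides σ(m) − ∑_{d∈D₁} d. -/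
theorem exceptional_divisors_identity (p m k : ℕ) (hp : p.Prime) (hpm : ¬ p ∣ m)
    (hm : 0 < m) (D : Finset ℕ) (hD : D ⊆ (p * m).properDivisors) (hDcard : D.card ≤ k)
    (hσ : ArithmeticFunction.sigma 1 (p * m) = 2 * (p * m) + ∑ d ∈ D, d) :
    (1 + p) * ArithmeticFunction.sigma 1 m =
      2 * p * m + ∑ d ∈ D.filter (fun d => ¬ p ∣ d), d +
        p * ∑ d ∈ (D.filter (fun d => p ∣ d)).image (fun d => d / p), d ∧
    (p : ℤ) ∣ (ArithmeticFunction.sigma 1 m : ℤ) - ∑ d ∈ D.filter (fun d => ¬ p ∣ d), (d : ℤ) := by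
  have hcop : Nat.Coprime p m := (Nat.Prime.coprime_iff_not_dvd hp).mpr hpm
  have hmul : ArithmeticFunction.sigma 1 (p * m) =
      (1 + p) * ArithmeticFunction.sigma 1 m := by
    rw [ArithmeticFunction.isMultiplicative_sigma.map_mul_of_coprime hcop]
    congr 1
    rw [ArithmeticFunction.sigma_one_apply, hp.divisors]
    exact Finset.sum_pair hp.one_lt.ne
  -- sum over image
  have himg : ∑ d ∈ (D.filter (fun d => p ∣ d)).image (fun d => d / p), d =
      ∑ d ∈ D.filter (fun d => p ∣ d), d / p := by
    apply Finset.sum_image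
    intro a ha b hb hab
    have hpa : p ∣ a := (Finset.mem_filter.mp ha).2
    have hpb : p ∣ b := (Finset.mem_filter.mp hb).2
    calc a = p * (a / p) := (Nat.mul_div_cancel' hpa).symm
      _ = p * (b / p) := by rw [show a / p = b / p from hab]
      _ = b := Nat.mul_div_cancel' hpb
  have hpfac : p * ∑ d ∈ D.filter (fun d => p ∣ d), d / p =
      ∑ d ∈ D.filter (fun d => p ∣ d), d := by
    rw [Finset.mul_sum]
    apply Finset.sum_congr rfl
    intro d hd
    exact Nat.mul_div_cancel' (Finset.mem_filter.mp hd).2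
  have hsplit : ∑ d ∈ D, d = ∑ d ∈ D.filter (fun d => ¬ p ∣ d), d +
      ∑ d ∈ D.filter (fun d => p ∣ d), d := by
    rw [add_comm]
    exact (Finset.sum_filter_add_sum_filter_not D (fun d => p ∣ d) _).symm
  have h1 : (1 + p) * ArithmeticFunction.sigma 1 m =
      2 * p * m + ∑ d ∈ D.filter (fun d => ¬ p ∣ d), d +
        p * ∑ d ∈ (D.filter (fun d => p ∣ d)).image (fun d => d / p), d := by
    rw [himg, hpfac, ← hmul, hσ, hsplit]
    ring
  refine ⟨h1, ?_⟩
  have h2 : ((1 + p : ℕ) : ℤ) * (ArithmeticFunction.sigma 1 m : ℤ) =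
      2 * p * m + (∑ d ∈ D.filter (fun d => ¬ p ∣ d), (d : ℤ)) +
        p * ∑ d ∈ D.filter (fun d => p ∣ d), ((d : ℕ) / p : ℕ) := by
    rw [show ((1+p:ℕ):ℤ) * _ = ((((1+p) * ArithmeticFunction.sigma 1 m : ℕ)):ℤ) by push_cast; ring, h1, himg]; push_cast; ring
  refine ⟨2 * m + (∑ d ∈ D.filter (fun d => p ∣ d), ((d : ℕ) / p : ℕ) : ℤ)
      - ArithmeticFunction.sigma 1 m, ?_⟩
  push_cast at h2 ⊢
  linarith
end
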